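/- arXiv:2406.04714 — 7 statements merged into one kernel-verified Lean document; each statement's English description precedes it below -/
import Mathlib

section
/- For all positive real numbers a, b, c there exists a constant C(a,b,c) > 0 such that for all real λ, ∫_{-∞}^{∞} exp(-a x² + b|x|) exp(-c|λ - x|) dx ≤ C(a,b,c) exp(-c|λ|). -/
/-!
Since `|λ| ≤ |λ - x| + |x|`, the kernel satisfies `exp (-c|λ - x|) ≤ exp (-c|λ|) exp (c|x|)`, so the
integral is at most `exp (-c|λ|)` times the integral of `exp (-a x² + (b + c)|x|)`, which is finite
because the Gaussian factor beats any exponential of `|x|`.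
-/

open Real MeasureTheory

theorem integrable_exp_neg_mul_sq_add_mul_abs {a : ℝ} (ha : 0 < a) (β : ℝ) :
    Integrable fun x : ℝ => exp (-a * x ^ 2 + β * |x|) := by
  refine ((integrable_exp_neg_mul_sq (half_pos ha)).const_mul (exp (β ^ 2 / (2 * a)))).mono'
    (by fun_prop) (ae_of_all _ fun x => ?_)
  rw [norm_of_nonneg (exp_pos _).le, ← exp_add, exp_le_exp]
  have h_sq : β * |x| - a / 2 * x ^ 2 ≤ β ^ 2 / (2 * a) := by
    rw [le_div_iff₀ (by positivity), ← sq_abs x]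
    nlinarith [sq_nonneg (β - a * |x|)]
  linarith

theorem exp_neg_mul_abs_sub_le {c : ℝ} (hc : 0 ≤ c) (lam x : ℝ) :
    exp (-c * |lam - x|) ≤ exp (-c * |lam|) * exp (c * |x|) := by
  rw [← exp_add, exp_le_exp]
  nlinarith [abs_sub_abs_le_abs_sub lam x]

theorem stmt_1_general (a b c : ℝ) (ha : 0 < a) (hc : 0 < c) :
    ∃ C : ℝ, 0 < C ∧ ∀ lam : ℝ,
      ∫ x : ℝ, Real.exp (-a * x ^ 2 + b * |x|) * Real.exp (-c * |lam - x|)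
        ≤ C * Real.exp (-c * |lam|) := by
  have h_int := integrable_exp_neg_mul_sq_add_mul_abs ha (b + c)
  refine ⟨_, integral_exp_pos h_int, fun lam => ?_⟩
  calc ∫ x : ℝ, exp (-a * x ^ 2 + b * |x|) * exp (-c * |lam - x|)
      ≤ ∫ x : ℝ, exp (-c * |lam|) * exp (-a * x ^ 2 + (b + c) * |x|) := by
        refine integral_mono_of_nonneg (ae_of_all _ fun x => by positivity)
          (h_int.const_mul _) (ae_of_all _ fun x => ?_)
        calc exp (-a * x ^ 2 + b * |x|) * exp (-c * |lam - x|)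
            ≤ exp (-a * x ^ 2 + b * |x|) * (exp (-c * |lam|) * exp (c * |x|)) := by
              gcongr
              exact exp_neg_mul_abs_sub_le hc.le lam x
          _ = exp (-c * |lam|) * exp (-a * x ^ 2 + (b + c) * |x|) := by
              rw [mul_left_comm, ← exp_add]
              congr 2
              ring
    _ = (∫ x : ℝ, exp (-a * x ^ 2 + (b + c) * |x|)) * exp (-c * |lam|) := by
        rw [integral_const_mul, mul_comm]

theorem stmt_1 (a b c : ℝ) (ha : 0 < a) (hb : 0 < b) (hc : 0 < c) :
    ∃ C : ℝ, 0 < C ∧ ∀ lam : ℝ,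
      ∫ x : ℝ, Real.exp (-a * x ^ 2 + b * |x|) * Real.exp (-c * |lam - x|)
        ≤ C * Real.exp (-c * |lam|) :=
  stmt_1_general a b c ha hc
end

section
/- For every r > e, the function f(r,φ) = (4 log r)/(π r²) − 2 sin(2φ) log(cos φ + sin φ) + 2φ cos(2φ) − sin(2φ) + (sin φ)/r is negative for all φ in the interval [√(2 log r)/r, π/2]. -/
/-!
Write `s = sin φ`, `c = cos φ`. Since `c + s ≥ 1`, bounding `log (c + s)` from below by
`x - x² / 2` with `x = c + s - 1` turns the trigonometric part
`2φ cos 2φ - sin 2φ - 2 sin 2φ log (c + s)` into a polynomial in `φ, s, c`; the elementary bounds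
`φ - φ³/6 ≤ sin φ ≤ φ`, `cos φ ≥ 1 - φ²/2` (for `φ ≤ 0.9`) and `cos φ ≤ π/2 - φ` (for `φ ≥ 0.9`)
bring it below `2φ³ - 4φ²`. The remaining terms `4 log r / (π r²) + sin φ / r` stay below
`4φ² - 2φ³`: for `φ ≤ 1/2` because `φ ≥ √(2 log r) / r` makes each of them at most `φ²`, and for
`φ ≥ 1/2` because `r > e` makes their sum smaller than `0.6`.
-/

open Real

lemma sub_sq_div_two_le_log_one_add {x : ℝ} (hx : 0 ≤ x) : x - x ^ 2 / 2 ≤ log (1 + x) := by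
  refine le_trans ?_ (le_log_one_add_of_nonneg hx)
  rw [le_div_iff₀ (by linarith)]
  nlinarith [pow_nonneg hx 3]

/-- `-2sc - 4sc (x - x²/2)` with `x = c + s - 1`, simplified using `s² + c² = 1`: an upper bound
for `-sin 2φ - 2 sin 2φ log (cos φ + sin φ)` at `s = sin φ`, `c = cos φ`. -/
def logMajorant (s c : ℝ) : ℝ := 6 * s * c - 8 * s * c * (s + c) + 4 * (s * c) ^ 2

lemma logMajorant_comm (s c : ℝ) : logMajorant s c = logMajorant c s := by
  unfold logMajorant; ring

-- The sign of the coefficient `6a - 8a²` of `b` decides which bound on `b` is used below.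
lemma logMajorant_eq_of_sq_add_sq {a b : ℝ} (hab : a ^ 2 + b ^ 2 = 1) :
    logMajorant a b = 8 * a ^ 3 + 4 * a ^ 2 - 4 * a ^ 4 - 8 * a + b * (6 * a - 8 * a ^ 2) := by
  unfold logMajorant; linear_combination (4 * a ^ 2 - 8 * a) * hab

lemma logMajorant_le_of_le_three_quarters {a b : ℝ} (ha0 : 0 ≤ a) (ha : a ≤ 3 / 4) (hb : 0 ≤ b)
    (hab : a ^ 2 + b ^ 2 = 1) : logMajorant a b ≤ 5 * a ^ 3 - 4 * a ^ 2 - 2 * a := by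
  have hb_le : b ≤ 1 - a ^ 2 / 2 := by nlinarith [sq_nonneg (a ^ 2)]
  have hcoef : 0 ≤ 6 * a - 8 * a ^ 2 := by nlinarith
  rw [logMajorant_eq_of_sq_add_sq hab]
  nlinarith [mul_le_mul_of_nonneg_right hb_le hcoef]

lemma logMajorant_le_of_three_quarters_le {a b β : ℝ} (ha : 3 / 4 ≤ a) (hb : β ≤ b)
    (hab : a ^ 2 + b ^ 2 = 1) :
    logMajorant a b ≤ 8 * a ^ 3 + 4 * a ^ 2 - 4 * a ^ 4 - 8 * a + β * (6 * a - 8 * a ^ 2) := by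
  have hcoef : 6 * a - 8 * a ^ 2 ≤ 0 := by nlinarith
  rw [logMajorant_eq_of_sq_add_sq hab]
  nlinarith [mul_le_mul_of_nonpos_right hb hcoef]

lemma neg_sin_two_mul_sub_le_logMajorant {φ : ℝ} (h0 : 0 ≤ φ) (hpi : φ ≤ π / 2) :
    -sin (2 * φ) - 2 * sin (2 * φ) * log (cos φ + sin φ) ≤ logMajorant (sin φ) (cos φ) := by
  have hs : 0 ≤ sin φ := sin_nonneg_of_nonneg_of_le_pi h0 (by linarith [pi_pos])
  have hc : 0 ≤ cos φ := cos_nonneg_of_mem_Icc ⟨by linarith [pi_pos], hpi⟩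
  have hsc := sin_sq_add_cos_sq φ
  have hlog := sub_sq_div_two_le_log_one_add (x := cos φ + sin φ - 1) (by nlinarith)
  rw [add_sub_cancel] at hlog
  rw [sin_two_mul, logMajorant]
  nlinarith [mul_le_mul_of_nonneg_left hlog (mul_nonneg hs hc)]

lemma angular_majorant_le_of_le_nine_tenths {φ s c : ℝ} (h0 : 0 ≤ φ) (h1 : φ ≤ 0.9)
    (hs_le : s ≤ φ) (hs_ge : φ - φ ^ 3 / 6 ≤ s) (hc0 : 0 ≤ c) (hc : 1 - φ ^ 2 / 2 ≤ c)
    (hsc : s ^ 2 + c ^ 2 = 1) :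
    2 * φ * (c ^ 2 - s ^ 2) + logMajorant s c ≤ 2 * φ ^ 3 - 4 * φ ^ 2 := by
  have ha : 0 ≤ φ - s := sub_nonneg.2 hs_le
  have hb : 0 ≤ s - (φ - φ ^ 3 / 6) := sub_nonneg.2 hs_ge
  have hs0 : 0 ≤ s := by nlinarith
  rw [show c ^ 2 - s ^ 2 = 1 - 2 * s ^ 2 by linarith]
  rcases le_total s (3 / 4) with hs | hs
  · have hpoly : 2 * φ * (1 - 2 * s ^ 2) + (5 * s ^ 3 - 4 * s ^ 2 - 2 * s)
        ≤ 2 * φ ^ 3 - 4 * φ ^ 2 := by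
      nlinarith [mul_nonneg ha hb, mul_nonneg (mul_nonneg ha h0) h0, mul_nonneg ha ha,
        mul_nonneg (mul_nonneg ha ha) ha, mul_nonneg (mul_nonneg hb h0) h0,
        mul_nonneg (sub_nonneg.2 h1) (mul_nonneg ha h0),
        mul_nonneg (sub_nonneg.2 h1) (mul_nonneg h0 h0)]
    linarith [logMajorant_le_of_le_three_quarters hs0 hs hc0 hsc]
  · have hpoly : 2 * φ * (1 - 2 * s ^ 2) + (8 * s ^ 3 + 4 * s ^ 2 - 4 * s ^ 4 - 8 * s
        + (1 - φ ^ 2 / 2) * (6 * s - 8 * s ^ 2)) ≤ 2 * φ ^ 3 - 4 * φ ^ 2 := by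
      nlinarith [mul_nonneg ha hb, mul_nonneg (mul_nonneg ha h0) h0, mul_nonneg ha ha,
        mul_nonneg (mul_nonneg ha ha) ha, mul_nonneg (mul_nonneg hb h0) h0,
        mul_nonneg (sub_nonneg.2 h1) (mul_nonneg ha h0),
        mul_nonneg (sub_nonneg.2 h1) (mul_nonneg h0 h0)]
    linarith [logMajorant_le_of_three_quarters_le hs hc hsc]

lemma angular_majorant_le_of_nine_tenths_le {φ s c : ℝ} (h1 : 0.9 ≤ φ) (hc0 : 0 ≤ c)
    (hc : c ≤ π / 2 - φ) (hs0 : 0 ≤ s) (hsc : s ^ 2 + c ^ 2 = 1) :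
    2 * φ * (c ^ 2 - s ^ 2) + logMajorant s c ≤ 2 * φ ^ 3 - 4 * φ ^ 2 := by
  have hπ := pi_lt_d6
  have hc' : c ≤ 1.5708 - φ := by linarith
  rw [logMajorant_comm]
  have hmaj := logMajorant_le_of_le_three_quarters hc0 (by linarith) hs0 (by linarith)
  nlinarith [mul_nonneg hc0 (sub_nonneg.2 hc'), sq_nonneg c, sq_nonneg (φ - 1),
    mul_nonneg (sub_nonneg.2 h1) hc0, sq_nonneg (1.5708 - φ),
    mul_nonneg (mul_nonneg hc0 hc0) (sub_nonneg.2 hc'),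
    mul_nonneg (sub_nonneg.2 h1) (sq_nonneg (1 - φ))]

lemma angular_terms_le {φ : ℝ} (h0 : 0 ≤ φ) (hpi : φ ≤ π / 2) :
    2 * φ * cos (2 * φ) - sin (2 * φ) - 2 * sin (2 * φ) * log (cos φ + sin φ)
      ≤ 2 * φ ^ 3 - 4 * φ ^ 2 := by
  have hlog := neg_sin_two_mul_sub_le_logMajorant h0 hpi
  have hs : 0 ≤ sin φ := sin_nonneg_of_nonneg_of_le_pi h0 (by linarith [pi_pos])
  have hc : 0 ≤ cos φ := cos_nonneg_of_mem_Icc ⟨by linarith [pi_pos], hpi⟩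
  have hsc := sin_sq_add_cos_sq φ
  have hmaj : 2 * φ * (cos φ ^ 2 - sin φ ^ 2) + logMajorant (sin φ) (cos φ)
      ≤ 2 * φ ^ 3 - 4 * φ ^ 2 := by
    rcases le_total φ 0.9 with h | h
    · exact angular_majorant_le_of_le_nine_tenths h0 h (sin_le h0) (sin_ge_sub_cube h0) hc
        one_sub_sq_div_two_le_cos hsc
    · have hcos : cos φ ≤ π / 2 - φ := by
        rw [← sin_pi_div_two_sub]; exact sin_le (by linarith)
      exact angular_majorant_le_of_nine_tenths_le h hc hcos hs hsc
  rw [cos_two_mul' φ]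
  linarith

lemma four_mul_log_div_pi_mul_sq_lt_sq {r φ : ℝ} (hr : 1 < r)
    (hφ : √(2 * log r) / r ≤ φ) : 4 * log r / (π * r ^ 2) < φ ^ 2 := by
  have hr0 : 0 < r := by linarith
  have hlog : 0 < log r := log_pos hr
  have hu : 0 ≤ √(2 * log r) / r := by positivity
  calc 4 * log r / (π * r ^ 2) < (√(2 * log r) / r) ^ 2 := by
        rw [div_pow, sq_sqrt (by positivity), div_lt_div_iff₀ (by positivity) (by positivity)]
        nlinarith [pi_gt_three, mul_pos hlog (pow_pos hr0 2)]
    _ ≤ φ ^ 2 := pow_le_pow_left₀ hu hφ 2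

lemma inv_le_of_sqrt_two_mul_log_div_le {r φ : ℝ} (hr : exp (1 / 2) ≤ r)
    (hφ : √(2 * log r) / r ≤ φ) : r⁻¹ ≤ φ := by
  have hr0 : 0 < r := (exp_pos _).trans_le hr
  have hlog : 1 / 2 ≤ log r := (le_log_iff_exp_le hr0).2 hr
  have hsqrt : 1 ≤ √(2 * log r) := one_le_sqrt.2 (by linarith)
  calc r⁻¹ = 1 / r := inv_eq_one_div r
    _ ≤ √(2 * log r) / r := by gcongr
    _ ≤ φ := hφ

lemma four_mul_log_div_pi_mul_sq_lt_one_fifth {r : ℝ} (hr : exp 1 ≤ r) :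
    4 * log r / (π * r ^ 2) < 1 / 5 := by
  have he := exp_one_gt_d9
  have hr0 : 0 < r := (exp_pos _).trans_le hr
  have hlog0 : 0 ≤ log r := log_nonneg (by linarith)
  have hlog : log r * exp 1 ≤ r := by
    have h := log_le_sub_one_of_pos (div_pos hr0 (exp_pos 1))
    rwa [log_div hr0.ne' (exp_pos 1).ne', log_exp, sub_le_sub_iff_right,
      le_div_iff₀ (exp_pos 1)] at h
  have hlog' : log r * 2.718 ≤ r := by nlinarith
  have hπr : 8.15 * r ≤ π * r ^ 2 := by nlinarith [pi_gt_three]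
  rw [div_lt_div_iff₀ (by positivity) (by norm_num)]
  linarith

lemma radial_terms_lt {r φ : ℝ} (hr : exp 1 ≤ r) (hφ1 : √(2 * log r) / r ≤ φ)
    (hφ2 : φ ≤ π / 2) : 4 * log r / (π * r ^ 2) + sin φ / r < 4 * φ ^ 2 - 2 * φ ^ 3 := by
  have hr1 : 1 < r := lt_of_lt_of_le (one_lt_exp_iff.2 one_pos) hr
  have hr0 : 0 < r := by linarith
  have hinv : r⁻¹ ≤ φ :=
    inv_le_of_sqrt_two_mul_log_div_le ((exp_le_exp.2 (by norm_num)).trans hr) hφ1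
  rw [div_eq_mul_inv (sin φ)]
  rcases le_total φ (1 / 2) with h | h
  · have hφ0 : 0 ≤ φ := (inv_pos.2 hr0).le.trans hinv
    have hlog := four_mul_log_div_pi_mul_sq_lt_sq hr1 hφ1
    nlinarith [mul_le_mul (sin_le hφ0) hinv (inv_pos.2 hr0).le hφ0]
  · have he := exp_one_gt_d9
    have hπ := pi_lt_d6
    have hlog := four_mul_log_div_pi_mul_sq_lt_one_fifth hr
    have hinv' : r⁻¹ < 0.37 := by
      rw [inv_lt_comm₀ hr0 (by norm_num)]; norm_num; linarith
    have hpoly : 0.75 ≤ 4 * φ ^ 2 - 2 * φ ^ 3 := by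
      nlinarith [mul_nonneg (sub_nonneg.2 h) (sub_nonneg.2 hφ2), sq_nonneg (φ - 1 / 2)]
    nlinarith [mul_le_mul (sin_le_one φ) hinv'.le (inv_pos.2 hr0).le zero_le_one]

theorem stmt_2 (r : ℝ) (hr : Real.exp 1 < r) (φ : ℝ)
    (hφ : φ ∈ Set.Icc (Real.sqrt (2 * Real.log r) / r) (π / 2)) :
    4 * Real.log r / (π * r ^ 2)
      - 2 * Real.sin (2 * φ) * Real.log (Real.cos φ + Real.sin φ)
      + 2 * φ * Real.cos (2 * φ) - Real.sin (2 * φ) + Real.sin φ / r < 0 := by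
  obtain ⟨hφ1, hφ2⟩ := hφ
  have hr0 : 0 < r := (exp_pos 1).trans hr
  have hφ0 : 0 ≤ φ := (div_nonneg (sqrt_nonneg _) hr0.le).trans hφ1
  linarith [angular_terms_le hφ0 hφ2, radial_terms_lt hr.le hφ1 hφ2]
end

section
/- Let q = (μ + iν) e^{πi/4} with μ, ν real, |ν| ≤ 1/√2 and μ ≥ 2. Then |e^{(πi/2)q²} − √2 e^{πi/8} cos(πq/2)| ≥ (1/√2) sinh(πμ/(2√2) − π/4) − e^{π/4} e^{−πμ²/2} > 0; in particular the function G(q) = (e^{(πi/2)q²} − √2 e^{πi/8} cos(πq/2))/cos(πq) does not vanish for such q. -/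
open Real Complex

/-! Write `q = z e^{πi/4}` with `z = μ + iν`. Then `q² = i z²`, so the Gaussian term has modulus
`e^{-π(μ² - ν²)/2}`, which is tiny, while `|cos w| ≥ sinh |Im w|` and `Im (πq/2) = π(μ + ν)/(2√2)`
make the cosine term large; the reverse triangle inequality gives the bound. It is positive for
`μ ≥ 2` because `sinh t > t`, and `cos (πq) ≠ 0` because `Im (πq) ≠ 0`. -/

namespace Complex

theorem sinh_abs_im_le_norm_cos (z : ℂ) : Real.sinh |z.im| ≤ ‖cos z‖ := by
  have h₁ : ‖Complex.exp (-z * I)‖ = Real.exp z.im := by simp [Complex.norm_exp]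
  have h₂ : ‖-Complex.exp (z * I)‖ = Real.exp (-z.im) := by simp [Complex.norm_exp]
  have key := abs_norm_sub_norm_le (Complex.exp (-z * I)) (-Complex.exp (z * I))
  rw [h₁, h₂, sub_neg_eq_add, add_comm] at key
  rw [← Real.abs_sinh, Real.sinh_eq, abs_div, abs_two, cos, norm_div, Complex.norm_two]
  gcongr

theorem cos_ne_zero_of_im_ne_zero {z : ℂ} (hz : z.im ≠ 0) : cos z ≠ 0 := by
  intro h
  have := sinh_abs_im_le_norm_cos z
  rw [h, norm_zero] at this
  exact (Real.sinh_pos_iff.2 (abs_pos.2 hz)).not_ge this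

theorem re_ofReal_add_ofReal_mul_I (x y : ℝ) : ((x : ℂ) + y * I).re = x := by simp

theorem im_ofReal_add_ofReal_mul_I (x y : ℝ) : ((x : ℂ) + y * I).im = y := by simp

end Complex

theorem exp_pi_mul_I_div_four : Complex.exp (π * I / 4) = (1 + I) / √2 := by
  rw [show π * I / 4 = ((π / 4 : ℝ) : ℂ) * I by push_cast; ring, exp_mul_I,
    ← ofReal_cos, ← ofReal_sin, Real.cos_pi_div_four, Real.sin_pi_div_four]
  have h : (√2 : ℂ) ^ 2 = 2 := by norm_cast; exact Real.sq_sqrt zero_le_two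
  have hs : (√2 : ℂ) ≠ 0 := by exact_mod_cast Real.sqrt_ne_zero'.2 two_pos
  field_simp
  push_cast
  linear_combination (1 + I) / 2 * h

theorem im_mul_exp_pi_mul_I_div_four (z : ℂ) :
    (z * Complex.exp (π * I / 4)).im = (z.re + z.im) / √2 := by
  rw [exp_pi_mul_I_div_four, ← mul_div_assoc, div_ofReal_im, mul_add, mul_one, add_im, mul_I_im]
  ring

theorem mul_exp_pi_mul_I_div_four_sq (z : ℂ) :
    (z * Complex.exp (π * I / 4)) ^ 2 = z ^ 2 * I := by
  rw [mul_pow, ← Complex.exp_nat_mul,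
    show ((2 : ℕ) : ℂ) * (π * I / 4) = (π / 2 : ℝ) * I by push_cast; ring,
    exp_mul_I, ← ofReal_cos, ← ofReal_sin, Real.cos_pi_div_two, Real.sin_pi_div_two,
    ofReal_zero, ofReal_one, one_mul, zero_add]

theorem norm_exp_pi_mul_I_div_two_mul_sq (z : ℂ) :
    ‖Complex.exp (π * I / 2 * (z * Complex.exp (π * I / 4)) ^ 2)‖
      = Real.exp (-π * (z.re ^ 2 - z.im ^ 2) / 2) := by
  rw [norm_exp, mul_exp_pi_mul_I_div_four_sq,
    show π * I / 2 * (z ^ 2 * I) = (-(π / 2) : ℝ) * z ^ 2 by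
      push_cast; linear_combination (π / 2 * z ^ 2) * I_sq,
    re_ofReal_mul, sq, mul_re]
  ring_nf

theorem cos_pi_mul_mul_exp_pi_mul_I_div_four_ne_zero {z : ℂ} (hz : z.re + z.im ≠ 0) :
    cos (π * (z * Complex.exp (π * I / 4))) ≠ 0 := by
  apply cos_ne_zero_of_im_ne_zero
  rw [im_ofReal_mul, im_mul_exp_pi_mul_I_div_four]
  exact mul_ne_zero pi_ne_zero (div_ne_zero hz (by positivity))

theorem norm_sqrt_two_mul_exp_pi_mul_I_div_eight_mul (w : ℂ) :
    ‖(√2 : ℂ) * Complex.exp (π * I / 8) * w‖ = √2 * ‖w‖ := by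
  rw [norm_mul, norm_mul, show π * I / 8 = ((π / 8 : ℝ) : ℂ) * I by push_cast; ring,
    norm_exp_ofReal_mul_I, norm_real, Real.norm_of_nonneg (Real.sqrt_nonneg 2), mul_one]

section

variable {μ ν : ℝ}

theorem norm_exp_pi_mul_I_div_two_mul_sq_le (hν : |ν| ≤ 1 / √2) :
    ‖Complex.exp (π * I / 2 * ((μ + ν * I) * Complex.exp (π * I / 4)) ^ 2)‖
      ≤ Real.exp (π / 4) * Real.exp (-π * μ ^ 2 / 2) := by
  have hν2 : ν ^ 2 ≤ 1 / 2 := by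
    have := pow_le_pow_left₀ (abs_nonneg ν) hν 2
    rwa [sq_abs, div_pow, Real.sq_sqrt zero_le_two, one_pow] at this
  rw [norm_exp_pi_mul_I_div_two_mul_sq, re_ofReal_add_ofReal_mul_I, im_ofReal_add_ofReal_mul_I,
    ← Real.exp_add]
  gcongr
  nlinarith [pi_pos]

theorem sinh_le_norm_cos_pi_mul_div_two (hν : |ν| ≤ 1 / √2) :
    Real.sinh (π * μ / (2 * √2) - π / 4)
      ≤ ‖cos (π * ((μ + ν * I) * Complex.exp (π * I / 4)) / 2)‖ := by
  refine le_trans ?_ (sinh_abs_im_le_norm_cos _)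
  rw [Real.sinh_le_sinh, div_ofNat_im, im_ofReal_mul, im_mul_exp_pi_mul_I_div_four,
    re_ofReal_add_ofReal_mul_I, im_ofReal_add_ofReal_mul_I]
  refine le_trans ?_ (le_abs_self _)
  have hν' : -(1 / 2) ≤ ν / √2 := by
    have := div_le_div_of_nonneg_right (neg_le_of_abs_le hν) (Real.sqrt_nonneg 2)
    rwa [neg_div, div_div, Real.mul_self_sqrt zero_le_two] at this
  have hsplit : π * ((μ + ν) / √2) / 2 = π * μ / (2 * √2) + π / 2 * (ν / √2) := by ring
  rw [hsplit]
  nlinarith [mul_le_mul_of_nonneg_left hν' (div_nonneg pi_pos.le zero_le_two)]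

theorem inv_sqrt_two_mul_sinh_le_norm (hν : |ν| ≤ 1 / √2) :
    1 / √2 * Real.sinh (π * μ / (2 * √2) - π / 4)
      ≤ ‖(√2 : ℂ) * Complex.exp (π * I / 8)
          * cos (π * ((μ + ν * I) * Complex.exp (π * I / 4)) / 2)‖ := by
  rw [norm_sqrt_two_mul_exp_pi_mul_I_div_eight_mul]
  have hs : 1 / √2 ≤ √2 := by
    rw [div_le_iff₀ (by positivity), Real.mul_self_sqrt zero_le_two]; norm_num
  exact (mul_le_mul_of_nonneg_left (sinh_le_norm_cos_pi_mul_div_two hν) (by positivity)).trans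
    (mul_le_mul_of_nonneg_right hs (norm_nonneg _))

/-- At `μ = 2` the margin is `π (√2/2 - 1/4) - √2 ≈ 0.02`, hence the need for `π > 3.14`. -/
theorem sqrt_two_lt_pi_mul_div_sub (hμ : 2 ≤ μ) : √2 < π * μ / (2 * √2) - π / 4 := by
  have hs2 : √2 ^ 2 = 2 := Real.sq_sqrt zero_le_two
  have hs : 1.414 ≤ √2 := by nlinarith [Real.sqrt_nonneg 2]
  have : π * μ / (2 * √2) = π * μ * √2 / 4 := by
    rw [div_eq_div_iff (by positivity) four_ne_zero]
    linear_combination (-2) * π * μ * hs2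
  rw [this]
  nlinarith [pi_gt_d2, mul_le_mul_of_nonneg_left hμ (mul_nonneg pi_pos.le (Real.sqrt_nonneg 2))]

theorem one_lt_inv_sqrt_two_mul_sinh (hμ : 2 ≤ μ) :
    1 < 1 / √2 * Real.sinh (π * μ / (2 * √2) - π / 4) := by
  have ht := sqrt_two_lt_pi_mul_div_sub hμ
  have hs : 0 < √2 := by positivity
  calc (1 : ℝ) = 1 / √2 * √2 := by field_simp
    _ < 1 / √2 * Real.sinh (π * μ / (2 * √2) - π / 4) := by
      gcongr
      exact ht.trans (Real.self_lt_sinh_iff.2 (hs.trans ht))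

theorem exp_pi_div_four_mul_exp_lt_one (hμ : 2 ≤ μ) :
    Real.exp (π / 4) * Real.exp (-π * μ ^ 2 / 2) < 1 := by
  rw [← Real.exp_add, Real.exp_lt_one_iff]
  nlinarith [pi_pos, mul_le_mul_of_nonneg_left (show (4 : ℝ) ≤ μ ^ 2 by nlinarith) pi_pos.le]

end

theorem stmt_6 (μ ν : ℝ) (hν : |ν| ≤ 1 / Real.sqrt 2) (hμ : 2 ≤ μ)
    (q : ℂ) (hq : q = (μ + ν * Complex.I) * Complex.exp (π * Complex.I / 4)) :
    ‖Complex.exp (π * Complex.I / 2 * q ^ 2)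
        - Real.sqrt 2 * Complex.exp (π * Complex.I / 8) * Complex.cos (π * q / 2)‖
      ≥ (1 / Real.sqrt 2) * Real.sinh (π * μ / (2 * Real.sqrt 2) - π / 4)
          - Real.exp (π / 4) * Real.exp (-π * μ ^ 2 / 2)
    ∧ 0 < (1 / Real.sqrt 2) * Real.sinh (π * μ / (2 * Real.sqrt 2) - π / 4)
          - Real.exp (π / 4) * Real.exp (-π * μ ^ 2 / 2)
    ∧ (Complex.exp (π * Complex.I / 2 * q ^ 2)
        - Real.sqrt 2 * Complex.exp (π * Complex.I / 8) * Complex.cos (π * q / 2))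
        / Complex.cos (π * q) ≠ 0 := by
  subst hq
  have hbound := (sub_le_sub (inv_sqrt_two_mul_sinh_le_norm (μ := μ) hν)
    (norm_exp_pi_mul_I_div_two_mul_sq_le (μ := μ) hν)).trans
      ((norm_sub_norm_le _ _).trans_eq (norm_sub_rev _ _))
  have hpos : 0 < 1 / √2 * Real.sinh (π * μ / (2 * √2) - π / 4)
      - Real.exp (π / 4) * Real.exp (-π * μ ^ 2 / 2) := by
    linarith [one_lt_inv_sqrt_two_mul_sinh hμ, exp_pi_div_four_mul_exp_lt_one hμ]
  have hμν : (μ + ν * I).re + (μ + ν * I).im ≠ 0 := by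
    rw [re_ofReal_add_ofReal_mul_I, im_ofReal_add_ofReal_mul_I]
    have : 1 / √2 ≤ 1 := by rw [div_le_one (by positivity)]; exact Real.one_le_sqrt.2 one_le_two
    linarith [neg_le_of_abs_le hν]
  refine ⟨hbound, hpos, div_ne_zero ?_ (cos_pi_mul_mul_exp_pi_mul_I_div_four_ne_zero hμν)⟩
  exact norm_pos_iff.1 (hpos.trans_le hbound)
end

section
/- Define u(r,φ) = (2 log r) sin(2φ) − 2(π/2 − φ) cos(2φ) − sin(2φ) − (sin φ)/r for r ≥ e and φ ∈ [0, π/4]. Then u(r,0) = −π < 0, u(r,π/4) = 2 log r − 1 − 1/(√2 r) > 0, and φ ↦ u(r,φ) is strictly increasing on [0, π/4]; hence for each r ≥ e there is a unique φ(r) ∈ (0, π/4) with u(r, φ(r)) = 0. -/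
open Real

noncomputable def ufun (r φ : ℝ) : ℝ :=
  (2 * Real.log r) * Real.sin (2 * φ) - 2 * (π / 2 - φ) * Real.cos (2 * φ)
    - Real.sin (2 * φ) - Real.sin φ / r

theorem stmt_12 (r : ℝ) (hr : Real.exp 1 ≤ r) :
    ufun r 0 = -π
    ∧ ufun r (π / 4) = 2 * Real.log r - 1 - 1 / (Real.sqrt 2 * r)
    ∧ 0 < ufun r (π / 4)
    ∧ StrictMonoOn (ufun r) (Set.Icc 0 (π / 4))
    ∧ ∃! φ : ℝ, φ ∈ Set.Ioo 0 (π / 4) ∧ ufun r φ = 0 := by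
  have he : (2.7182818283 : ℝ) < Real.exp 1 := Real.exp_one_gt_d9
  have hr1 : (1:ℝ) < r := by linarith
  have hrpos : (0:ℝ) < r := by linarith
  have hlog : 1 ≤ Real.log r := by
    rw [← Real.log_exp 1]
    exact Real.log_le_log (Real.exp_pos 1) hr
  have hss : Real.sqrt 2 * Real.sqrt 2 = 2 := Real.mul_self_sqrt (by norm_num)
  have hs2 : (1:ℝ) < Real.sqrt 2 := by nlinarith [Real.sqrt_nonneg 2]
  have h0 : ufun r 0 = -π := by
    simp [ufun]
    ring
  have h4 : ufun r (π / 4) = 2 * Real.log r - 1 - 1 / (Real.sqrt 2 * r) := by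
    have h2 : (2:ℝ) * (π/4) = π/2 := by ring
    rw [ufun, h2, Real.sin_pi_div_two, Real.cos_pi_div_two, Real.sin_pi_div_four]
    have hs : Real.sqrt 2 ≠ 0 := by positivity
    field_simp
    nlinarith [hss]
  have hpos : 0 < ufun r (π / 4) := by
    rw [h4]
    have h1 : 1 / (Real.sqrt 2 * r) < 1 := by
      rw [div_lt_one (by positivity)]
      nlinarith
    linarith
  have key : ∀ φ : ℝ, HasDerivAt (ufun r)
      (4 * Real.log r * Real.cos (2*φ) + 4 * (π/2 - φ) * Real.sin (2*φ)
        - Real.cos φ / r) φ := by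
    intro φ
    have hd1 : HasDerivAt (fun x : ℝ => Real.sin (2*x)) (2 * Real.cos (2*φ)) φ := by
      simpa [Function.comp_def, mul_comm] using (Real.hasDerivAt_sin (2*φ)).comp φ
        ((hasDerivAt_id φ).const_mul 2)
    have hd2 : HasDerivAt (fun x : ℝ => Real.cos (2*x)) (-(2 * Real.sin (2*φ))) φ := by
      have := (Real.hasDerivAt_cos (2*φ)).comp φ ((hasDerivAt_id φ).const_mul 2)
      simpa [Function.comp_def, mul_comm] using this
    have hd3 : HasDerivAt (fun x : ℝ => 2 * (π/2 - x) * Real.cos (2*x))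
        ((2 * (0 - 1)) * Real.cos (2*φ) + 2 * (π/2 - φ) * (-(2 * Real.sin (2*φ)))) φ :=
      (((hasDerivAt_const φ (π/2)).sub (hasDerivAt_id φ)).const_mul 2).mul hd2
    have hd4 : HasDerivAt (fun x : ℝ => Real.sin x / r) (Real.cos φ / r) φ :=
      (Real.hasDerivAt_sin φ).div_const r
    have hd : HasDerivAt (ufun r)
        ((2 * Real.log r) * (2 * Real.cos (2*φ))
          - ((2 * (0 - 1)) * Real.cos (2*φ) + 2 * (π/2 - φ) * (-(2 * Real.sin (2*φ))))
          - 2 * Real.cos (2*φ) - Real.cos φ / r) φ :=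
      (((hd1.const_mul (2 * Real.log r)).sub hd3).sub hd1).sub hd4
    convert hd using 1
    ring
  have hcont : Continuous (ufun r) :=
    continuous_iff_continuousAt.2 fun x => (key x).continuousAt
  have hmono : StrictMonoOn (ufun r) (Set.Icc 0 (π / 4)) := by
    apply strictMonoOn_of_deriv_pos (convex_Icc 0 (π/4)) hcont.continuousOn
    intro x hx
    rw [interior_Icc] at hx
    rw [(key x).deriv]
    obtain ⟨hx0, hx4⟩ := hx
    have hpi : (3:ℝ) < π := Real.pi_gt_three
    have hc0 : 0 ≤ Real.cos (2*x) := by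
      apply Real.cos_nonneg_of_mem_Icc
      constructor <;> nlinarith
    have hsx0 : 0 ≤ Real.sin (2*x) := by
      apply Real.sin_nonneg_of_nonneg_of_le_pi <;> nlinarith
    have hc1 : Real.cos (2*x) ≤ 1 := Real.cos_le_one _
    have hs1 : Real.sin (2*x) ≤ 1 := Real.sin_le_one _
    have hpyth : Real.sin (2*x) ^ 2 + Real.cos (2*x) ^ 2 = 1 := Real.sin_sq_add_cos_sq _
    have hsum : 1 ≤ Real.cos (2*x) + Real.sin (2*x) := by nlinarith
    have hcos : Real.cos x / r ≤ 1 / r := by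
      gcongr
      exact Real.cos_le_one x
    have h1r : 1 / r < 1 := by rw [div_lt_one hrpos]; exact hr1
    nlinarith [Real.cos_le_one x, mul_nonneg (sub_nonneg.2 hlog) hc0]
  refine ⟨h0, h4, hpos, hmono, ?_⟩
  have hsub : Set.Ioo (0:ℝ) (π/4) ⊆ Set.Icc 0 (π/4) := Set.Ioo_subset_Icc_self
  have hpi4 : (0:ℝ) ≤ π/4 := by positivity
  have hiv : (0:ℝ) ∈ ufun r '' Set.Ioo 0 (π/4) := by
    apply intermediate_value_Ioo hpi4 hcont.continuousOn
    rw [h0]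
    exact ⟨neg_lt_zero.2 Real.pi_pos, hpos⟩
  obtain ⟨φ, hφmem, hφ⟩ := hiv
  refine ⟨φ, ⟨hφmem, hφ⟩, ?_⟩
  rintro ψ ⟨hψmem, hψ⟩
  exact hmono.injOn (hsub hψmem) (hsub hφmem) (by rw [hψ, hφ])
end

section
/- Let φ : [e,∞) → [0, π/4] satisfy, for every r ≥ e, the equation (2 log r) sin(2φ(r)) − 2(π/2 − φ(r)) cos(2φ(r)) − sin(2φ(r)) − (sin φ(r))/r = 0. Then lim_{r→∞} (4 log r / π) · sin φ(r) = 1. -/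
/-!
Since `φ r ∈ [0, π/4]`, the equation gives `(2 log r - 1) sin (2 φ r) ≤ π + 1`, so
`sin (2 φ r) → 0` and hence `φ r → 0`. Solving the equation for `log r · sin (φ r)` gives
`(4 log r / π) sin φ = (2 (π/2 - φ) cos 2φ + sin 2φ + sin φ / r) / (π cos φ)`,
whose right-hand side tends to `π / π = 1`.
-/

open Real Filter Topology Set

lemma sin_two_mul_le_of_balance {x L r : ℝ} (hx : x ∈ Icc 0 (π / 4)) (hL : 1 ≤ L) (hr : 1 ≤ r)
    (h : 2 * L * sin (2 * x) - 2 * (π / 2 - x) * cos (2 * x) - sin (2 * x) - sin x / r = 0) :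
    sin (2 * x) ≤ (π + 1) / L := by
  obtain ⟨hx0, hx4⟩ := hx
  have hsin2 : 0 ≤ sin (2 * x) := sin_nonneg_of_nonneg_of_le_pi (by linarith) (by linarith)
  have hcos2 : 0 ≤ cos (2 * x) := cos_nonneg_of_mem_Icc ⟨by linarith, by linarith⟩
  have hfirst : 2 * (π / 2 - x) * cos (2 * x) ≤ π := by
    nlinarith [cos_le_one (2 * x)]
  have hsecond : sin x / r ≤ 1 := by
    rw [div_le_one (by linarith)]
    linarith [sin_le_one x]
  rw [le_div_iff₀ (by linarith)]
  nlinarith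

lemma tendsto_zero_of_tendsto_sin_two_mul {f : ℝ → ℝ} {l : Filter ℝ}
    (hf : ∀ᶠ r in l, f r ∈ Icc 0 (π / 4)) (hsin : Tendsto (fun r => sin (2 * f r)) l (𝓝 0)) :
    Tendsto f l (𝓝 0) := by
  have harcsin : Tendsto (fun r => arcsin (sin (2 * f r)) / 2) l (𝓝 0) := by
    simpa using (continuous_arcsin.tendsto 0).comp hsin |>.div_const 2
  refine harcsin.congr' (hf.mono fun r ⟨h0, h4⟩ => ?_)
  rw [arcsin_sin (by linarith [pi_pos]) (by linarith)]
  ring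

lemma tendsto_sin_comp_div_atTop (f : ℝ → ℝ) :
    Tendsto (fun r => sin (f r) / r) atTop (𝓝 0) := by
  refine squeeze_zero_norm' ?_ tendsto_inv_atTop_zero
  filter_upwards [eventually_gt_atTop 0] with r hr
  rw [norm_div, norm_of_nonneg hr.le, div_le_iff₀ hr, inv_mul_cancel₀ hr.ne']
  exact abs_sin_le_one _

lemma mul_sin_eq_of_balance {x L r : ℝ} (hcos : cos x ≠ 0)
    (h : 2 * L * sin (2 * x) - 2 * (π / 2 - x) * cos (2 * x) - sin (2 * x) - sin x / r = 0) :
    4 * L / π * sin x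
      = (2 * (π / 2 - x) * cos (2 * x) + sin (2 * x) + sin x / r) / (π * cos x) := by
  rw [eq_div_iff (mul_ne_zero pi_ne_zero hcos)]
  have hπ : 4 * L / π * sin x * (π * cos x) = 2 * L * sin (2 * x) := by
    rw [sin_two_mul]
    field_simp
    ring
  linear_combination hπ + h

lemma tendsto_balance_ratio {f g : ℝ → ℝ} {l : Filter ℝ} (hf : Tendsto f l (𝓝 0))
    (hg : Tendsto g l (𝓝 0)) :
    Tendsto (fun r => (2 * (π / 2 - f r) * cos (2 * f r) + sin (2 * f r) + g r) / (π * cos (f r)))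
      l (𝓝 1) := by
  have hnum : Tendsto (fun r => 2 * (π / 2 - f r) * cos (2 * f r) + sin (2 * f r) + g r) l (𝓝 π) := by
    have hc : Continuous fun x : ℝ => 2 * (π / 2 - x) * cos (2 * x) + sin (2 * x) := by fun_prop
    have hπ : 2 * (π / 2 - 0) * cos (2 * 0) + sin (2 * 0) + 0 = π := by simp; ring
    simpa only [hπ, Function.comp_def] using ((hc.tendsto 0).comp hf).add hg
  have hden : Tendsto (fun r => π * cos (f r)) l (𝓝 π) := by
    simpa using ((continuous_cos.tendsto 0).comp hf).const_mul π
  rw [← div_self pi_ne_zero]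
  exact hnum.div hden pi_ne_zero

theorem stmt_13 (φ : ℝ → ℝ)
    (hrange : ∀ r, Real.exp 1 ≤ r → φ r ∈ Set.Icc 0 (π / 4))
    (heq : ∀ r, Real.exp 1 ≤ r →
      (2 * Real.log r) * Real.sin (2 * φ r)
        - 2 * (π / 2 - φ r) * Real.cos (2 * φ r)
        - Real.sin (2 * φ r) - Real.sin (φ r) / r = 0) :
    Tendsto (fun r => (4 * Real.log r / π) * Real.sin (φ r)) atTop (nhds 1) := by
  have hev : ∀ᶠ r in atTop, exp 1 ≤ r := eventually_ge_atTop _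
  have hone : 1 ≤ exp 1 := by linarith [add_one_le_exp (1 : ℝ)]
  have hsin2 : Tendsto (fun r => sin (2 * φ r)) atTop (𝓝 0) := by
    have hbound : Tendsto (fun r => (π + 1) / log r) atTop (𝓝 0) := by
      simpa [div_eq_mul_inv] using tendsto_log_atTop.inv_tendsto_atTop.const_mul (π + 1)
    refine squeeze_zero' (hev.mono fun r hr => ?_) (hev.mono fun r hr => ?_) hbound
    · obtain ⟨h0, h4⟩ := hrange r hr
      exact sin_nonneg_of_nonneg_of_le_pi (by linarith) (by linarith)
    · have hlog : 1 ≤ log r := by simpa using log_le_log (exp_pos 1) hr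
      exact sin_two_mul_le_of_balance (hrange r hr) hlog (hone.trans hr) (heq r hr)
  have hφ : Tendsto φ atTop (𝓝 0) :=
    tendsto_zero_of_tendsto_sin_two_mul (hev.mono hrange) hsin2
  refine (tendsto_balance_ratio hφ (tendsto_sin_comp_div_atTop φ)).congr' ?_
  filter_upwards [hev] with r hr
  obtain ⟨h0, h4⟩ := hrange r hr
  have hcos : cos (φ r) ≠ 0 :=
    (cos_pos_of_mem_Ioo ⟨by linarith [pi_pos], by linarith [pi_pos]⟩).ne'
  exact (mul_sin_eq_of_balance hcos (heq r hr)).symm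
end

section
/- The function W(φ) = −2 sin(2φ) · log(1/(cos φ − sin φ)) − 2(π/2 + φ) cos(2φ) + sin(2φ) is strictly negative for all φ ∈ [0, π/4). Specifically, 2(π/2 + φ)cos(2φ) > 1 for 0 ≤ φ ≤ π/6 and 2 sin(2φ) log(1/(cos φ − sin φ)) > 1 for π/6 < φ < π/4. -/
open Real

lemma aux_cs_pos {φ : ℝ} (h0 : 0 ≤ φ) (h4 : φ < π / 4) :
    0 < Real.cos φ - Real.sin φ := by
  have h : Real.sin φ < Real.sin (π / 2 - φ) := by
    apply Real.sin_lt_sin_of_lt_of_le_pi_div_two <;> [linarith [Real.pi_pos]; linarith; linarith]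
  rw [Real.sin_pi_div_two_sub] at h
  linarith

lemma aux_cs_le_one {φ : ℝ} (h0 : 0 ≤ φ) (h4 : φ < π / 4) :
    Real.cos φ - Real.sin φ ≤ 1 := by
  have h1 := Real.cos_le_one φ
  have h2 : 0 ≤ Real.sin φ := Real.sin_nonneg_of_nonneg_of_le_pi h0 (by linarith [Real.pi_pos])
  linarith

lemma aux_part2 (φ : ℝ) (h0 : 0 ≤ φ) (h6 : φ ≤ π / 6) :
    1 < 2 * (π / 2 + φ) * Real.cos (2 * φ) := by
  have hc : Real.cos (π / 3) ≤ Real.cos (2 * φ) := by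
    apply Real.cos_le_cos_of_nonneg_of_le_pi (by linarith) (by linarith [Real.pi_pos]) (by linarith)
  rw [Real.cos_pi_div_three] at hc
  nlinarith [Real.pi_gt_three]

lemma aux_logbound {φ : ℝ} (h6 : π / 6 < φ) (h4 : φ < π / 4) :
    3 / 5 < Real.log (1 / (Real.cos φ - Real.sin φ)) := by
  have hpi := Real.pi_gt_three
  have h0 : (0:ℝ) ≤ φ := by linarith
  have hpos := aux_cs_pos h0 h4
  have hcos : Real.cos φ < Real.cos (π / 6) :=
    Real.cos_lt_cos_of_nonneg_of_le_pi (by linarith) (by linarith) h6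
  have hsin : Real.sin (π / 6) < Real.sin φ :=
    Real.sin_lt_sin_of_lt_of_le_pi_div_two (by linarith) (by linarith) h6
  rw [Real.cos_pi_div_six] at hcos
  rw [Real.sin_pi_div_six] at hsin
  have hcs : Real.cos φ - Real.sin φ < (Real.sqrt 3 - 1) / 2 := by linarith
  have h3 : (0:ℝ) < Real.sqrt 3 - 1 := by
    nlinarith [Real.sq_sqrt (by norm_num : (3:ℝ) ≥ 0), Real.sqrt_nonneg 3]
  -- key: exp (3/5) < sqrt 3 + 1
  have hexp : Real.exp (3 / 5) < Real.sqrt 3 + 1 := by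
    have h5 : Real.exp (3 / 5) ^ 5 < (Real.sqrt 3 + 1) ^ 5 := by
      have he3 : Real.exp (3 / 5) ^ 5 = Real.exp 1 ^ 3 := by
        rw [← Real.exp_nat_mul, ← Real.exp_nat_mul]; norm_num
      have h1 := Real.exp_one_lt_d9
      have hs : Real.sqrt 3 ^ 2 = 3 := Real.sq_sqrt (by norm_num)
      have hs1 : (1:ℝ) ≤ Real.sqrt 3 := by nlinarith [Real.sqrt_nonneg 3]
      have h21 : Real.exp 1 ^ 3 < 21 := by
        calc Real.exp 1 ^ 3 < 2.7182818286 ^ 3 :=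
              pow_lt_pow_left₀ h1 (Real.exp_pos 1).le (by norm_num)
          _ < 21 := by norm_num
      have hexpand : (Real.sqrt 3 + 1) ^ 5 = 44 * Real.sqrt 3 + 76 := by
        linear_combination (Real.sqrt 3 ^ 3 + 5 * Real.sqrt 3 ^ 2 + 13 * Real.sqrt 3 + 25) * hs
      rw [he3, hexpand]; linarith
    exact lt_of_pow_lt_pow_left₀ 5 (by positivity) h5
  rw [one_div, Real.log_inv]
  have hlog : Real.log (Real.cos φ - Real.sin φ) < Real.log ((Real.sqrt 3 - 1) / 2) :=
    Real.log_lt_log hpos hcs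
  have hlog2 : Real.log ((Real.sqrt 3 - 1) / 2) < -(3 / 5) := by
    have : (Real.sqrt 3 - 1) / 2 = (Real.sqrt 3 + 1)⁻¹ := by
      refine eq_inv_of_mul_eq_one_left ?_
      nlinarith [Real.sq_sqrt (by norm_num : (3:ℝ) ≥ 0)]
    rw [this, Real.log_inv, neg_lt_neg_iff]
    rw [Real.lt_log_iff_exp_lt (by positivity)]
    exact hexp
  linarith

lemma aux_part3 (φ : ℝ) (h6 : π / 6 < φ) (h4 : φ < π / 4) :
    1 < 2 * Real.sin (2 * φ) * Real.log (1 / (Real.cos φ - Real.sin φ)) := by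
  have hpi := Real.pi_gt_three
  have hsin : Real.sin (π / 3) < Real.sin (2 * φ) :=
    Real.sin_lt_sin_of_lt_of_le_pi_div_two (by linarith) (by linarith) (by linarith)
  rw [Real.sin_pi_div_three] at hsin
  have hlog := aux_logbound h6 h4
  have hs : Real.sqrt 3 ^ 2 = 3 := Real.sq_sqrt (by norm_num)
  have hs17 : (1.7:ℝ) < Real.sqrt 3 := by nlinarith [Real.sqrt_nonneg 3]
  nlinarith [mul_pos (sub_pos.2 hsin) (sub_pos.2 hlog)]

theorem stmt_14 :
    (∀ φ ∈ Set.Ico (0 : ℝ) (π / 4),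
      -2 * Real.sin (2 * φ) * Real.log (1 / (Real.cos φ - Real.sin φ))
        - 2 * (π / 2 + φ) * Real.cos (2 * φ) + Real.sin (2 * φ) < 0)
    ∧ (∀ φ : ℝ, 0 ≤ φ → φ ≤ π / 6 →
        1 < 2 * (π / 2 + φ) * Real.cos (2 * φ))
    ∧ (∀ φ : ℝ, π / 6 < φ → φ < π / 4 →
        1 < 2 * Real.sin (2 * φ) * Real.log (1 / (Real.cos φ - Real.sin φ))) := by
  refine ⟨?_, aux_part2, aux_part3⟩
  rintro φ ⟨h0, h4⟩
  have hpi := Real.pi_gt_three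
  have hpos := aux_cs_pos h0 h4
  have hle1 := aux_cs_le_one h0 h4
  have hL : 0 ≤ Real.log (1 / (Real.cos φ - Real.sin φ)) := by
    rw [one_div, Real.log_inv]
    simp only [Left.nonneg_neg_iff]
    exact Real.log_nonpos (le_of_lt hpos) hle1
  have hS : Real.sin (2 * φ) ≤ 1 := Real.sin_le_one _
  have hS0 : 0 ≤ Real.sin (2 * φ) :=
    Real.sin_nonneg_of_nonneg_of_le_pi (by linarith) (by linarith)
  rcases le_or_gt φ (π / 6) with h | h
  · have hB := aux_part2 φ h0 h
    nlinarith [mul_nonneg hS0 hL]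
  · have hA := aux_part3 φ h h4
    have hC : 0 ≤ Real.cos (2 * φ) :=
      Real.cos_nonneg_of_mem_Icc ⟨by linarith, by linarith⟩
    nlinarith [mul_nonneg (by linarith : (0:ℝ) ≤ 2 * (π / 2 + φ)) hC]
end

section
/- Let η = η₁ + iη₂ be in the first quadrant (η₁, η₂ ≥ 0, η ≠ 0) with log|η| > 1/2, and suppose η₂/η₁ < √(2 log|η|) (interpreting the condition as trivially satisfied when η₁ ≥ η₂). Then exp(−2π(η₁² − η₂²) arg η − 4π η₁ η₂ log|η| + 2π η₁ η₂) ≤ 1; equivalently |η^{s−1} e^{−πi η²}| ≤ 1 where s − 1 = 2πi η² and η^{s−1} = exp((s−1)(log|η| + i arg η)) with arg η ∈ [0, π/2]. -/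
/-!
Write `η = a + b i`, `L = log ‖η‖`, `θ = arg η`. Both quantities equal `exp E` with
`E = -2π ((a² - b²) θ + a b (2L - 1))`, so it suffices that `(a² - b²) θ + a b (2L - 1) ≥ 0`.
For `b ≤ a` both summands are nonnegative. For `a < b` the first summand is negative, but
`a θ ≤ a tan θ = b` bounds it, and after multiplying by `a` the sum is at least `b (2a²L - b²)`,
which is positive by the hypothesis `b < a √(2L)`.
-/

open Real Complex

theorem Complex.re_mul_arg_le_im {z : ℂ} (hz : 0 ≤ z.im) : z.re * arg z ≤ z.im := by
  have harg : 0 ≤ arg z := arg_nonneg_iff.2 hz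
  rcases le_or_gt z.re 0 with hre | hre
  · exact (mul_nonpos_of_nonpos_of_nonneg hre harg).trans hz
  have harg_lt : arg z < π / 2 :=
    (le_abs_self _).trans_lt (abs_arg_lt_pi_div_two_iff.2 (Or.inl hre))
  calc z.re * arg z ≤ z.re * Real.tan (arg z) :=
        mul_le_mul_of_nonneg_left (Real.le_tan harg harg_lt) hre.le
    _ = z.im := by rw [tan_arg]; field_simp

theorem sq_lt_mul_of_lt_mul_sqrt {a b c : ℝ} (hb : 0 ≤ b) (hc : 0 ≤ c) (h : b < a * √c) :
    b ^ 2 < a ^ 2 * c := by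
  calc b ^ 2 < (a * √c) ^ 2 := pow_lt_pow_left₀ h hb two_ne_zero
    _ = a ^ 2 * c := by rw [mul_pow, sq_sqrt hc]

theorem arg_term_add_log_term_nonneg {a b θ L : ℝ} (ha : 0 ≤ a) (hb : 0 ≤ b) (hθ : 0 ≤ θ)
    (hL : 1 ≤ 2 * L) (hθb : a * θ ≤ b) (hcond : b ≤ a ∨ b ^ 2 < 2 * a ^ 2 * L) :
    0 ≤ (a ^ 2 - b ^ 2) * θ + a * b * (2 * L - 1) := by
  rcases le_or_gt b a with hba | hab
  · have hsq : b ^ 2 ≤ a ^ 2 := pow_le_pow_left₀ hb hba 2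
    have hL' : 0 ≤ 2 * L - 1 := by linarith
    positivity
  have hsq : b ^ 2 < 2 * a ^ 2 * L := hcond.resolve_left hab.not_ge
  have ha : 0 < a := ha.lt_of_ne (by rintro rfl; nlinarith)
  have hmul : 0 ≤ a * ((a ^ 2 - b ^ 2) * θ + a * b * (2 * L - 1)) :=
    calc (0 : ℝ) ≤ b * (2 * a ^ 2 * L - b ^ 2) := by nlinarith
      _ = (a ^ 2 - b ^ 2) * b + a ^ 2 * b * (2 * L - 1) := by ring
      _ ≤ (a ^ 2 - b ^ 2) * (a * θ) + a ^ 2 * b * (2 * L - 1) := by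
          gcongr ?_ + _
          exact mul_le_mul_of_nonpos_left hθb (by nlinarith)
      _ = a * ((a ^ 2 - b ^ 2) * θ + a * b * (2 * L - 1)) := by ring
  exact nonneg_of_mul_nonneg_right (by linarith) ha

theorem Complex.re_exponent (η : ℂ) (L θ : ℝ) :
    ((2 * π * I * η ^ 2) * (L + θ * I) + -(π * I) * η ^ 2).re
      = -2 * π * (η.re ^ 2 - η.im ^ 2) * θ - 4 * π * η.re * η.im * L + 2 * π * η.re * η.im := by
  simp only [add_re, add_im, mul_re, mul_im, neg_re, neg_im, I_re, I_im, ofReal_re, ofReal_im,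
    re_ofNat, im_ofNat, pow_two]
  ring

theorem stmt_18_general (η : ℂ) (h1 : 0 ≤ η.re) (h2 : 0 ≤ η.im)
    (hlog : 1 / 2 < Real.log (‖η‖))
    (hcond : η.im < η.re * Real.sqrt (2 * Real.log (‖η‖)) ∨ η.im ≤ η.re) :
    Real.exp (-2 * π * (η.re ^ 2 - η.im ^ 2) * Complex.arg η
        - 4 * π * η.re * η.im * Real.log (‖η‖)
        + 2 * π * η.re * η.im) ≤ 1
    ∧ ‖Complex.exp ((2 * π * Complex.I * η ^ 2)
          * (Real.log (‖η‖) + Complex.arg η * Complex.I))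
        * Complex.exp (-(π * Complex.I) * η ^ 2)‖ ≤ 1 := by
  have hcond' : η.im ≤ η.re ∨ η.im ^ 2 < 2 * η.re ^ 2 * Real.log ‖η‖ := by
    rcases hcond with h | h
    · right
      linarith [sq_lt_mul_of_lt_mul_sqrt h2 (by linarith) h]
    · exact Or.inl h
  have hnonneg := arg_term_add_log_term_nonneg h1 h2 (arg_nonneg_iff.2 h2) (by linarith)
    (re_mul_arg_le_im h2) hcond'
  have hE : -2 * π * (η.re ^ 2 - η.im ^ 2) * arg η - 4 * π * η.re * η.im * Real.log ‖η‖
      + 2 * π * η.re * η.im ≤ 0 := by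
    linarith [mul_nonneg pi_pos.le hnonneg]
  refine ⟨Real.exp_le_one_iff.2 hE, ?_⟩
  rw [← Complex.exp_add, norm_exp, re_exponent]
  exact Real.exp_le_one_iff.2 hE

theorem stmt_18 (η : ℂ) (h1 : 0 ≤ η.re) (h2 : 0 ≤ η.im) (hη : η ≠ 0)
    (hlog : 1 / 2 < Real.log (‖η‖))
    (hcond : η.im < η.re * Real.sqrt (2 * Real.log (‖η‖)) ∨ η.im ≤ η.re) :
    Real.exp (-2 * π * (η.re ^ 2 - η.im ^ 2) * Complex.arg η
        - 4 * π * η.re * η.im * Real.log (‖η‖)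
        + 2 * π * η.re * η.im) ≤ 1
    ∧ ‖Complex.exp ((2 * π * Complex.I * η ^ 2)
          * (Real.log (‖η‖) + Complex.arg η * Complex.I))
        * Complex.exp (-(π * Complex.I) * η ^ 2)‖ ≤ 1 :=
  stmt_18_general η h1 h2 hlog hcond
end
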